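/- Let b_1, …, b_n be XOS valuations. Then for every allocation (x_1, …, x_n) that is a partition of Fin m (the x_i are pairwise disjoint and their union is Fin m), it holds that ∑_i [ W^{b_{-i}}(Fin m) − W^{b_{-i}}(Fin m \ x_i) ] ≤ 2 · W^b(Fin m). -/

import Mathlib

open Finset

/-- A valuation on `m` items: normalized at `∅`, monotone, nonnegative. -/
def IsValuation {m : ℕ} (v : Finset (Fin m) → ℝ) : Prop :=
  v ∅ = 0 ∧ (∀ S T : Finset (Fin m), S ⊆ T → v S ≤ v T) ∧ (∀ S, 0 ≤ v S)

/-- `S` is in the demand set of valuation `v` at prices `p`. -/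
def InDemand {m : ℕ} (v : Finset (Fin m) → ℝ) (p : Fin m → ℝ) (S : Finset (Fin m)) : Prop :=
  ∀ T : Finset (Fin m), v T - ∑ j ∈ T, p j ≤ v S - ∑ j ∈ S, p j

/-- Gross substitutes valuations. -/
def IsGS {m : ℕ} (v : Finset (Fin m) → ℝ) : Prop :=
  IsValuation v ∧
    ∀ p q : Fin m → ℝ, (∀ j, p j ≤ q j) →
      ∀ S : Finset (Fin m), InDemand v p S →
        ∃ T : Finset (Fin m), InDemand v q T ∧ ∀ j ∈ S, p j = q j → j ∈ T

/-- Additive valuations. -/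
def IsAdditive {m : ℕ} (v : Finset (Fin m) → ℝ) : Prop :=
  ∃ w : Fin m → ℝ, (∀ j, 0 ≤ w j) ∧ ∀ S : Finset (Fin m), v S = ∑ j ∈ S, w j

/-- XOS valuations: a max over a nonempty finite family of nonnegative additive valuations. -/
def IsXOS {m : ℕ} (v : Finset (Fin m) → ℝ) : Prop :=
  ∃ (k : ℕ) (w : Fin (k + 1) → Fin m → ℝ),
    (∀ i j, 0 ≤ w i j) ∧
    ∀ S : Finset (Fin m),
      v S = Finset.univ.sup' Finset.univ_nonempty (fun i => ∑ j ∈ S, w i j)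

def GSvals (m : ℕ) : Set (Finset (Fin m) → ℝ) := {u | IsGS u}
def XOSvals (m : ℕ) : Set (Finset (Fin m) → ℝ) := {u | IsXOS u}

/-- The welfare `W^b(S)`: the maximum of `∑ i, b i (X i)` over allocations (pairwise disjoint
tuples of subsets) contained in `S`. -/
noncomputable def W {n m : ℕ} (b : Fin n → Finset (Fin m) → ℝ) (S : Finset (Fin m)) : ℝ :=
  sSup {t : ℝ | ∃ X : Fin n → Finset (Fin m),
    (∀ i j : Fin n, i ≠ j → Disjoint (X i) (X j)) ∧ (∀ i, X i ⊆ S) ∧ t = ∑ i, b i (X i)}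

/-- The welfare `W^{b₋ᵢ}(S)` with agent `i` omitted. -/
noncomputable def Wminus {n m : ℕ} (b : Fin n → Finset (Fin m) → ℝ) (i : Fin n)
    (S : Finset (Fin m)) : ℝ :=
  sSup {t : ℝ | ∃ X : Fin n → Finset (Fin m),
    (∀ k l : Fin n, k ≠ l → Disjoint (X k) (X l)) ∧ (∀ k, X k ⊆ S) ∧
    t = ∑ k ∈ Finset.univ.erase i, b k (X k)}

/-- The welfare `W^b(x)` for a multiplicity vector `x : Fin m → ℕ`: maximum of `∑ i, b i (X i)`
over tuples of sets in which each item `j` is used at most `x j` times. -/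
noncomputable def Wmult {n m : ℕ} (b : Fin n → Finset (Fin m) → ℝ) (x : Fin m → ℕ) : ℝ :=
  sSup {t : ℝ | ∃ X : Fin n → Finset (Fin m),
    (∀ j : Fin m, (Finset.univ.filter fun i => j ∈ X i).card ≤ x j) ∧ t = ∑ i, b i (X i)}

/-- The optimal welfare for the true valuations. -/
noncomputable def OPT {n m : ℕ} (v : Fin n → Finset (Fin m) → ℝ) : ℝ := W v Finset.univ

/-- A mechanism: allocation and payment maps on bid profiles. -/
structure Mechanism (n m : ℕ) where
  alloc : (Fin n → Finset (Fin m) → ℝ) → Fin n → Finset (Fin m)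
  pay : (Fin n → Finset (Fin m) → ℝ) → Fin n → ℝ

/-- A bid profile lies in the bid space `B`. -/
def InBidSpace {n m : ℕ} (B : Set (Finset (Fin m) → ℝ))
    (b : Fin n → Finset (Fin m) → ℝ) : Prop :=
  ∀ i, b i ∈ B

/-- On bid profiles from `B`, the allocation is pairwise disjoint. -/
def AllocDisjoint {n m : ℕ} (M : Mechanism n m) (B : Set (Finset (Fin m) → ℝ)) : Prop :=
  ∀ b, InBidSpace B b → ∀ i j : Fin n, i ≠ j → Disjoint (M.alloc b i) (M.alloc b j)

/-- On bid profiles from `B`, payments are nonnegative. -/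
def PayNonneg {n m : ℕ} (M : Mechanism n m) (B : Set (Finset (Fin m) → ℝ)) : Prop :=
  ∀ b, InBidSpace B b → ∀ i, 0 ≤ M.pay b i

/-- The utility of agent `i` with true valuation `v` under bid profile `b`. -/
noncomputable def util {n m : ℕ} (M : Mechanism n m) (v : Finset (Fin m) → ℝ) (i : Fin n)
    (b : Fin n → Finset (Fin m) → ℝ) : ℝ :=
  v (M.alloc b i) - M.pay b i

/-- Declared welfare maximizer. -/
def IsDWM {n m : ℕ} (M : Mechanism n m) (B : Set (Finset (Fin m) → ℝ)) : Prop :=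
  (∀ b, InBidSpace B b → ∑ i, b i (M.alloc b i) = W b Finset.univ) ∧
  (∀ b, InBidSpace B b → ∀ i, M.pay b i ≤ b i (M.alloc b i)) ∧
  (∀ b, InBidSpace B b → ∀ i : Fin n, ∃ b' : Fin n → Finset (Fin m) → ℝ,
    InBidSpace B b' ∧ b' i = b i ∧ M.alloc b' i = M.alloc b i ∧
    M.pay b' i = b i (M.alloc b i))

/-- English Walrasian mechanism: welfare-maximizing allocation w.r.t. the bids, with
payments given by the minimum Walrasian prices `W^b(𝟙 + e_j) − W^b(𝟙)`. -/
def IsEnglish {n m : ℕ} (M : Mechanism n m) (B : Set (Finset (Fin m) → ℝ)) : Prop :=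
  (∀ b, InBidSpace B b → ∑ i, b i (M.alloc b i) = W b Finset.univ) ∧
  (∀ b, InBidSpace B b → ∀ i, M.pay b i =
    ∑ j ∈ M.alloc b i,
      (Wmult b (fun k => if k = j then 2 else 1) - Wmult b (fun _ => 1)))

/-- VCG mechanism: welfare-maximizing allocation w.r.t. the bids, with externality payments. -/
def IsVCG {n m : ℕ} (M : Mechanism n m) (B : Set (Finset (Fin m) → ℝ)) : Prop :=
  (∀ b, InBidSpace B b → ∑ i, b i (M.alloc b i) = W b Finset.univ) ∧
  (∀ b, InBidSpace B b → ∀ i, M.pay b i =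
    Wminus b i Finset.univ - Wminus b i (Finset.univ \ M.alloc b i))

/-- Bid `bi` of agent `i` with true valuation `v` has exposure factor `γ`. -/
def HasExposureFactor {n m : ℕ} (M : Mechanism n m) (B : Set (Finset (Fin m) → ℝ))
    (v : Finset (Fin m) → ℝ) (i : Fin n) (bi : Finset (Fin m) → ℝ) (γ : ℝ) : Prop :=
  ∀ b : Fin n → Finset (Fin m) → ℝ, InBidSpace B b → b i = bi →
    M.pay b i ≤ (1 + γ) * v (M.alloc b i)

/-- `b` is a pure Nash equilibrium for true valuations `v`. -/
noncomputable def IsNash {n m : ℕ} (M : Mechanism n m) (B : Set (Finset (Fin m) → ℝ))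
    (v b : Fin n → Finset (Fin m) → ℝ) : Prop :=
  InBidSpace B b ∧
  ∀ i : Fin n, ∀ bi' ∈ B, util M (v i) i (Function.update b i bi') ≤ util M (v i) i b

/-- A finitely supported probability distribution. -/
structure FinDist (α : Type*) where
  supp : Finset α
  μ : α → ℝ
  nonneg : ∀ a, 0 ≤ μ a
  sum_one : ∑ a ∈ supp, μ a = 1

/-- Expectation of `f` under a finitely supported distribution. -/
noncomputable def FinDist.exp {α : Type*} (D : FinDist α) (f : α → ℝ) : ℝ :=
  ∑ a ∈ D.supp, D.μ a * f a

/-- Bayes-Nash equilibrium: strategies map types in `V` to bids in `B`, and no unilateral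
deviation (depending only on the agent's own type) improves expected utility. -/
noncomputable def IsBNE {n m : ℕ} (M : Mechanism n m) (V B : Set (Finset (Fin m) → ℝ))
    (D : FinDist (Fin n → Finset (Fin m) → ℝ))
    (s : Fin n → (Finset (Fin m) → ℝ) → Finset (Fin m) → ℝ) : Prop :=
  (∀ i : Fin n, ∀ vi ∈ V, s i vi ∈ B) ∧
  ∀ i : Fin n, ∀ s' : (Finset (Fin m) → ℝ) → Finset (Fin m) → ℝ, (∀ vi ∈ V, s' vi ∈ B) →
    D.exp (fun v => util M (v i) i (Function.update (fun k => s k (v k)) i (s' (v i)))) ≤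
    D.exp (fun v => util M (v i) i (fun k => s k (v k)))

/-- Strategy `si` of agent `i` has exposure factor `γ` under distribution `D`. -/
noncomputable def BayesExposure {n m : ℕ} (M : Mechanism n m)
    (V B : Set (Finset (Fin m) → ℝ)) (D : FinDist (Fin n → Finset (Fin m) → ℝ)) (i : Fin n)
    (si : (Finset (Fin m) → ℝ) → Finset (Fin m) → ℝ) (γ : ℝ) : Prop :=
  ∀ c : (Finset (Fin m) → ℝ) → Fin n → Finset (Fin m) → ℝ,
    (∀ vi ∈ V, InBidSpace B (c vi) ∧ c vi i = si vi) →
    D.exp (fun v => M.pay (c (v i)) i) ≤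
      (1 + γ) * D.exp (fun v => (v i) (M.alloc (c (v i)) i))

/-! An optimal allocation `Y` for all bidders stays feasible, after removing the items `xᵢ`,
for the bidders other than `i`; so the `i`-th externality is at most `bᵢ(Yᵢ)` plus the losses
`b_k(Y_k) - b_k(Y_k \ xᵢ)` of the others. For an XOS valuation these losses are bounded by the
prices of a supporting additive clause on `Y_k ∩ xᵢ`, and since the `xᵢ` are disjoint they add up
over `i` to at most `b_k(Y_k)`. Summing over `i` gives `W + W`. -/

open Function

section XOS

variable {m : ℕ}

def IsSupportingClause (v : Finset (Fin m) → ℝ) (S : Finset (Fin m)) (a : Fin m → ℝ) : Prop :=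
  (∀ j, 0 ≤ a j) ∧ v S = ∑ j ∈ S, a j ∧ ∀ T, ∑ j ∈ T, a j ≤ v T

theorem IsXOS.exists_isSupportingClause {v : Finset (Fin m) → ℝ} (hv : IsXOS v)
    (S : Finset (Fin m)) : ∃ a, IsSupportingClause v S a := by
  obtain ⟨k, w, hw, hvw⟩ := hv
  obtain ⟨l, -, hl⟩ := exists_mem_eq_sup' univ_nonempty fun l => ∑ j ∈ S, w l j
  exact ⟨w l, hw l, (hvw S).trans hl,
    fun T => (hvw T).symm ▸ le_sup' (fun l => ∑ j ∈ T, w l j) (mem_univ l)⟩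

theorem IsSupportingClause.sub_sdiff_le {v : Finset (Fin m) → ℝ} {S : Finset (Fin m)}
    {a : Fin m → ℝ} (ha : IsSupportingClause v S a) (A : Finset (Fin m)) :
    v S - v (S \ A) ≤ ∑ j ∈ S ∩ A, a j := by
  have hsplit := sum_inter_add_sum_sdiff S A a
  linarith [ha.2.1, ha.2.2 (S \ A)]

theorem IsXOS.mono {v : Finset (Fin m) → ℝ} (hv : IsXOS v) {S T : Finset (Fin m)}
    (hST : S ⊆ T) : v S ≤ v T := by
  obtain ⟨a, ha0, haS, haT⟩ := hv.exists_isSupportingClause S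
  calc v S = ∑ j ∈ S, a j := haS
    _ ≤ ∑ j ∈ T, a j := sum_le_sum_of_subset_of_nonneg hST fun j _ _ => ha0 j
    _ ≤ v T := haT T

theorem IsXOS.nonneg {v : Finset (Fin m) → ℝ} (hv : IsXOS v) (S : Finset (Fin m)) : 0 ≤ v S := by
  obtain ⟨a, ha0, haS, -⟩ := hv.exists_isSupportingClause S
  exact haS ▸ sum_nonneg fun j _ => ha0 j

theorem IsXOS.sum_sub_sdiff_le {ι : Type*} [Fintype ι] {v : Finset (Fin m) → ℝ} (hv : IsXOS v)
    (S : Finset (Fin m)) {x : ι → Finset (Fin m)} (hx : Pairwise (Disjoint on x)) :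
    ∑ i, (v S - v (S \ x i)) ≤ v S := by
  obtain ⟨a, ha⟩ := hv.exists_isSupportingClause S
  have hdisj : ((univ : Finset ι) : Set ι).PairwiseDisjoint fun i => S ∩ x i :=
    fun _ _ _ _ hil => (hx hil).mono inter_subset_right inter_subset_right
  calc ∑ i, (v S - v (S \ x i)) ≤ ∑ i, ∑ j ∈ S ∩ x i, a j :=
        sum_le_sum fun i _ => ha.sub_sdiff_le (x i)
    _ = ∑ j ∈ univ.biUnion fun i => S ∩ x i, a j := (sum_biUnion hdisj).symm
    _ ≤ ∑ j ∈ S, a j := sum_le_sum_of_subset_of_nonneg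
        (biUnion_subset.2 fun _ _ => inter_subset_left) fun j _ _ => ha.1 j
    _ = v S := ha.2.1.symm

end XOS

section Welfare

variable {n m : ℕ} (b : Fin n → Finset (Fin m) → ℝ)

theorem le_W {S : Finset (Fin m)} {X : Fin n → Finset (Fin m)} (hX : Pairwise (Disjoint on X))
    (hXS : ∀ i, X i ⊆ S) : ∑ i, b i (X i) ≤ W b S :=
  le_csSup ((Set.finite_range fun X : Fin n → Finset (Fin m) => ∑ i, b i (X i)).subset
    (by rintro _ ⟨X, -, -, rfl⟩; exact ⟨X, rfl⟩)).bddAbove ⟨X, fun _ _ h => hX h, hXS, rfl⟩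

theorem le_Wminus (i : Fin n) {S : Finset (Fin m)} {X : Fin n → Finset (Fin m)}
    (hX : Pairwise (Disjoint on X)) (hXS : ∀ k, X k ⊆ S) :
    ∑ k ∈ univ.erase i, b k (X k) ≤ Wminus b i S :=
  le_csSup ((Set.finite_range fun X : Fin n → Finset (Fin m) =>
      ∑ k ∈ univ.erase i, b k (X k)).subset
    (by rintro _ ⟨X, -, -, rfl⟩; exact ⟨X, rfl⟩)).bddAbove ⟨X, fun _ _ h => hX h, hXS, rfl⟩

theorem exists_allocation_eq_W (S : Finset (Fin m)) :
    ∃ Y : Fin n → Finset (Fin m), Pairwise (Disjoint on Y) ∧ (∀ i, Y i ⊆ S) ∧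
      ∑ i, b i (Y i) = W b S := by
  set welfares := {t : ℝ | ∃ X : Fin n → Finset (Fin m), (∀ i j : Fin n, i ≠ j →
      Disjoint (X i) (X j)) ∧ (∀ i, X i ⊆ S) ∧ t = ∑ i, b i (X i)}
  have hfin : welfares.Finite :=
    (Set.finite_range fun X : Fin n → Finset (Fin m) => ∑ i, b i (X i)).subset
      (by rintro _ ⟨X, -, -, rfl⟩; exact ⟨X, rfl⟩)
  have hne : welfares.Nonempty :=
    ⟨_, fun _ => ∅, fun _ _ _ => disjoint_empty_left _, fun _ => empty_subset _, rfl⟩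
  obtain ⟨Y, hY, hYS, hYW⟩ := hne.csSup_mem hfin
  exact ⟨Y, fun i j h => hY i j h, hYS, hYW.symm⟩

theorem Wminus_le_W {i : Fin n} (hbi : ∀ T, 0 ≤ b i T) (S : Finset (Fin m)) :
    Wminus b i S ≤ W b S := by
  refine csSup_le ⟨_, fun _ => ∅, fun _ _ _ => disjoint_empty_left _,
    fun _ => empty_subset _, rfl⟩ ?_
  rintro _ ⟨X, hX, hXS, rfl⟩
  calc ∑ k ∈ univ.erase i, b k (X k) ≤ ∑ k, b k (X k) :=
        sum_le_sum_of_subset_of_nonneg (erase_subset i univ) fun k _ hk =>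
          eq_of_mem_of_notMem_erase (mem_univ k) hk ▸ hbi (X i)
    _ ≤ W b S := le_W b (fun _ _ h => hX _ _ h) hXS

theorem Wminus_sub_Wminus_sdiff_le {i : Fin n} (hbi : ∀ T, 0 ≤ b i T) {S : Finset (Fin m)}
    {Y : Fin n → Finset (Fin m)} (hY : Pairwise (Disjoint on Y)) (hYS : ∀ k, Y k ⊆ S)
    (hYW : ∑ k, b k (Y k) = W b S) (A : Finset (Fin m)) :
    Wminus b i S - Wminus b i (S \ A) ≤
      b i (Y i) + ∑ k ∈ univ.erase i, (b k (Y k) - b k (Y k \ A)) := by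
  have hup := Wminus_le_W b hbi S
  have hdown : ∑ k ∈ univ.erase i, b k (Y k \ A) ≤ Wminus b i (S \ A) :=
    le_Wminus b i (fun _ _ h => (hY h).mono sdiff_subset sdiff_subset)
      fun k => sdiff_subset_sdiff (hYS k) le_rfl
  have hsplit := add_sum_erase univ (fun k => b k (Y k)) (mem_univ i)
  rw [sum_sub_distrib]
  linarith

end Welfare

theorem stmt11_general {n m : ℕ} (b : Fin n → Finset (Fin m) → ℝ) (hb : ∀ i, IsXOS (b i))
    (x : Fin n → Finset (Fin m))
    (hdisj : ∀ i j : Fin n, i ≠ j → Disjoint (x i) (x j)) :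
    ∑ i, (Wminus b i Finset.univ - Wminus b i (Finset.univ \ x i)) ≤
      2 * W b Finset.univ := by
  obtain ⟨Y, hY, -, hYW⟩ := exists_allocation_eq_W b univ
  have hloss_nonneg : ∀ i k, 0 ≤ b k (Y k) - b k (Y k \ x i) := fun i k =>
    sub_nonneg.2 ((hb k).mono sdiff_subset)
  calc ∑ i, (Wminus b i univ - Wminus b i (univ \ x i))
      ≤ ∑ i, (b i (Y i) + ∑ k ∈ univ.erase i, (b k (Y k) - b k (Y k \ x i))) :=
        sum_le_sum fun i _ =>
          Wminus_sub_Wminus_sdiff_le b (hb i).nonneg hY (fun _ => subset_univ _) hYW (x i)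
    _ ≤ ∑ i, (b i (Y i) + ∑ k, (b k (Y k) - b k (Y k \ x i))) := by
        gcongr with i
        exacts [fun k _ _ => hloss_nonneg i k, erase_subset i univ]
    _ = W b univ + ∑ k, ∑ i, (b k (Y k) - b k (Y k \ x i)) := by
        rw [sum_add_distrib, sum_comm, hYW]
    _ ≤ W b univ + ∑ k, b k (Y k) := by
        gcongr with k
        exact (hb k).sum_sub_sdiff_le (Y k) fun i j => hdisj i j
    _ = 2 * W b univ := by rw [hYW]; ring

/-- for XOS bids and any partition (x_i) of all items,
∑ᵢ [W^{b₋ᵢ}(𝟙) − W^{b₋ᵢ}(𝟙 − xᵢ)] ≤ 2·W^b(𝟙). -/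
theorem stmt11 {n m : ℕ} (b : Fin n → Finset (Fin m) → ℝ) (hb : ∀ i, IsXOS (b i))
    (x : Fin n → Finset (Fin m))
    (hdisj : ∀ i j : Fin n, i ≠ j → Disjoint (x i) (x j))
    (hcover : Finset.univ.biUnion x = (Finset.univ : Finset (Fin m))) :
    ∑ i, (Wminus b i Finset.univ - Wminus b i (Finset.univ \ x i)) ≤
      2 * W b Finset.univ :=
  stmt11_general b hb x hdisj
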